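/- Let D be a commutative Dedekind domain, σ ≠ 1 an automorphism, δ ≠ 0 a σ-derivation, R = D[x; σ, δ]. If 𝔭 is a prime ideal of D and 𝔪 is the largest (σ, δ)-ideal of D contained in 𝔭, and 𝔪 ≠ 0, then 𝔪 is a (σ, δ)-prime ideal of D. -/

import Mathlib

open Polynomial Finset

/-- An Ore extension `R = D[x; σ, δ]`: a ring `R` containing (an image of) `D`,
with an element `x` satisfying `x·a = σ(a)x + δ(a)`, which is a free left
`D`-module with basis `1, x, x², …` (every element has a unique polynomial
representation with left-hand coefficients). -/
structure OreData (D : Type*) (R : Type*) [Ring D] [Ring R]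
    (σ : D →+* D) (δ : D → D) where
  i : D →+* R
  x : R
  comm : ∀ a : D, x * i a = i (σ a) * x + i (δ a)
  repr : ∀ f : R, ∃! g : Polynomial D, f = g.sum fun k a => i a * x ^ k

/-- `𝔭[x; σ, δ] = 𝔭R`: the set of elements of `R` all of whose coefficients lie in `𝔭`. -/
def OreData.pSet {D R : Type*} [Ring D] [Ring R] {σ : D →+* D} {δ : D → D}
    (O : OreData D R σ δ) (𝔭 : Ideal D) : Set R :=
  {f | ∃ g : Polynomial D, (∀ k, g.coeff k ∈ 𝔭) ∧ f = g.sum fun k a => O.i a * O.x ^ k}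

/-- A `(σ, δ)`-ideal: an ideal stable under `σ` and `δ`. -/
def SDIdeal {D : Type*} [CommRing D] (σ δ : D → D) (I : Ideal D) : Prop :=
  (∀ a ∈ I, σ a ∈ I) ∧ (∀ a ∈ I, δ a ∈ I)

/-- A `(σ, δ)`-prime ideal: a proper `(σ, δ)`-ideal `I` such that `JK ⊆ I` for
`(σ, δ)`-ideals `J, K` implies `J ⊆ I` or `K ⊆ I`. -/
def SDPrime {D : Type*} [CommRing D] (σ δ : D → D) (I : Ideal D) : Prop :=
  I ≠ ⊤ ∧ SDIdeal σ δ I ∧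
    ∀ J K : Ideal D, SDIdeal σ δ J → SDIdeal σ δ K → J * K ≤ I → J ≤ I ∨ K ≤ I

/-- Minimal among nonzero `(σ, δ)`-prime ideals. -/
def MinSDPrime {D : Type*} [CommRing D] (σ δ : D → D) (I : Ideal D) : Prop :=
  I ≠ ⊥ ∧ SDPrime σ δ I ∧ ∀ J : Ideal D, SDPrime σ δ J → J ≠ ⊥ → J ≤ I → J = I

/-- A (two-sided) ideal of a possibly noncommutative ring, as a set. -/
def IsTwoSidedIdealSet {R : Type*} [Ring R] (P : Set R) : Prop :=
  0 ∈ P ∧ (∀ a b : R, a ∈ P → b ∈ P → a + b ∈ P) ∧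
    (∀ r a : R, a ∈ P → r * a ∈ P) ∧ (∀ r a : R, a ∈ P → a * r ∈ P)

/-- A prime (two-sided) ideal of a possibly noncommutative ring. -/
def IsPrimeTS {R : Type*} [Ring R] (P : Set R) : Prop :=
  IsTwoSidedIdealSet P ∧ P ≠ Set.univ ∧
    ∀ a b : R, (∀ r : R, a * r * b ∈ P) → a ∈ P ∨ b ∈ P

/-- Minimal among nonzero prime (two-sided) ideals of `R`. -/
def MinimalPrimeTS {R : Type*} [Ring R] (P : Set R) : Prop :=
  IsPrimeTS P ∧ P ≠ {0} ∧ ∀ Q : Set R, IsPrimeTS Q → Q ≠ {0} → Q ⊆ P → Q = P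

theorem stmt6_general {D : Type*} [CommRing D]
    (σ : D ≃+* D) (δ : D → D)
    (𝔭 : Ideal D) (h𝔭 : 𝔭.IsPrime)
    (𝔪 : Ideal D) (h1 : SDIdeal (⇑σ) δ 𝔪) (h2 : 𝔪 ≤ 𝔭)
    (h3 : ∀ J : Ideal D, SDIdeal (⇑σ) δ J → J ≤ 𝔭 → J ≤ 𝔪) :
    SDPrime (⇑σ) δ 𝔪 := by
  have h𝔪_ne_top : 𝔪 ≠ ⊤ := fun h => h𝔭.ne_top (top_le_iff.mp (h ▸ h2))
  refine ⟨h𝔪_ne_top, h1, fun J K hJ hK hJK => ?_⟩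
  rcases h𝔭.mul_le.mp (hJK.trans h2) with hJ𝔭 | hK𝔭
  · exact Or.inl (h3 J hJ hJ𝔭)
  · exact Or.inr (h3 K hK hK𝔭)

/-- If `𝔭` is a prime ideal of `D` and `𝔪 ≠ 0` is the largest `(σ, δ)`-ideal of
`D` contained in `𝔭`, then `𝔪` is a `(σ, δ)`-prime ideal of `D`. -/
theorem stmt6 {D : Type*} [CommRing D] [IsDomain D] [IsDedekindDomain D]
    (σ : D ≃+* D) (hσ : (⇑σ : D → D) ≠ id) (δ : D → D) (hδ0 : δ ≠ 0)
    (hadd : ∀ a b : D, δ (a + b) = δ a + δ b)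
    (hleib : ∀ a b : D, δ (a * b) = σ a * δ b + δ a * b)
    (𝔭 : Ideal D) (h𝔭 : 𝔭.IsPrime)
    (𝔪 : Ideal D) (h1 : SDIdeal (⇑σ) δ 𝔪) (h2 : 𝔪 ≤ 𝔭)
    (h3 : ∀ J : Ideal D, SDIdeal (⇑σ) δ J → J ≤ 𝔭 → J ≤ 𝔪)
    (h0 : 𝔪 ≠ ⊥) :
    SDPrime (⇑σ) δ 𝔪 :=
  stmt6_general σ δ 𝔭 h𝔭 𝔪 h1 h2 h3
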